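/- arXiv:math/0504232 — 6 statements merged into one kernel-verified Lean document; each statement's English description precedes it below -/
import Mathlib

section
/- Suppose σ, σ′ ∈ Ωᵢ and ρ, ρ′ ∈ Ωⱼ are homogeneous elements such that σ − σ′ = ℏσ₁ for some homogeneous σ₁ ∈ Ωᵢ and ρ − ρ′ = ℏρ₁ for some homogeneous ρ₁ ∈ Ωⱼ. If x, x′ ∈ Ω satisfy ℏx = σρ − (−1)^{ij}ρσ and ℏx′ = σ′ρ′ − (−1)^{ij}ρ′σ′, then x − x′ ∈ ℏΩ. (Hence the generalized Poisson bracket on the quotient Ω/ℏΩ, defined by {class(σ), class(ρ)} := class(x) where ℏx = [σ,ρ], is well defined, independent of the choice of lifts σ, ρ and of the element x.) -/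
/-!
Substituting `σ = σ' + ℏσ₁` and `ρ = ρ' + ℏρ₁` and using that `ℏ` is central, the graded
commutator expands as `[σ,ρ] = [σ',ρ'] + ℏ([σ₁,ρ'] + [σ',ρ₁]) + ℏ²[σ₁,ρ₁]`. Each commutator on the
right lies in `ℏΩ`, so `ℏ(x - x') ∈ ℏ²Ω`. Cancelling one factor `ℏ` is exactly what the
hypothesis `ℏ²σ = 0 → σ ∈ ℏΩ` allows.
-/

section GradedCommutator

variable {R : Type*} [Ring R]

def gradedComm (n : ℕ) (a b : R) : R := a * b - (-1 : R) ^ n * (b * a)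

theorem gradedComm_add_mul_add_mul {h : R} (hh : ∀ r : R, Commute h r) (n : ℕ)
    (a a₁ b b₁ : R) :
    gradedComm n (a + h * a₁) (b + h * b₁) =
      gradedComm n a b + h * (gradedComm n a₁ b + gradedComm n a b₁) +
        h ^ 2 * gradedComm n a₁ b₁ := by
  have hsign : Commute h ((-1 : R) ^ n) := hh _
  simp only [gradedComm, mul_add, add_mul, mul_sub, pow_two, mul_assoc, (hh a).left_comm,
    (hh b).left_comm, (hh a₁).left_comm, (hh b₁).left_comm, hsign.left_comm]
  noncomm_ring

theorem exists_eq_mul_of_mul_eq_sq_mul {h : R} (hreg : ∀ r : R, h ^ 2 * r = 0 → ∃ s, r = h * s)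
    {a b : R} (hab : h * a = h ^ 2 * b) : ∃ c, a = h * c := by
  have hzero : h ^ 2 * (a - h * b) = 0 := by
    rw [pow_two, mul_assoc, mul_sub, hab, pow_two, mul_assoc, sub_self, mul_zero]
  obtain ⟨s, hs⟩ := hreg _ hzero
  exact ⟨b + s, by rw [mul_add, ← hs, add_sub_cancel]⟩

end GradedCommutator

theorem metabracket_well_defined_general {Ω : Type*} [Ring Ω]
    (A : ℕ → AddSubgroup Ω)
    (ℏ : Ω) (hcentral : ∀ a : Ω, ℏ * a = a * ℏ)
    (hreg : ∀ σ : Ω, ℏ ^ 2 * σ = 0 → ∃ τ : Ω, σ = ℏ * τ)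
    (hcomm : ∀ (i j : ℕ), ∀ σ ∈ A i, ∀ ρ ∈ A j,
      ∃ τ : Ω, σ * ρ - (-1 : Ω) ^ (i * j) * (ρ * σ) = ℏ * τ)
    (i j : ℕ)
    (σ σ' σ₁ : Ω) (hσ' : σ' ∈ A i) (hσ₁ : σ₁ ∈ A i)
    (ρ ρ' ρ₁ : Ω) (hρ' : ρ' ∈ A j) (hρ₁ : ρ₁ ∈ A j)
    (hσdiff : σ - σ' = ℏ * σ₁) (hρdiff : ρ - ρ' = ℏ * ρ₁)
    (x x' : Ω)
    (hx : ℏ * x = σ * ρ - (-1 : Ω) ^ (i * j) * (ρ * σ))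
    (hx' : ℏ * x' = σ' * ρ' - (-1 : Ω) ^ (i * j) * (ρ' * σ')) :
    ∃ y : Ω, x - x' = ℏ * y := by
  obtain ⟨t₁, ht₁⟩ := hcomm i j σ₁ hσ₁ ρ' hρ'
  obtain ⟨t₂, ht₂⟩ := hcomm i j σ' hσ' ρ₁ hρ₁
  obtain ⟨t₃, ht₃⟩ := hcomm i j σ₁ hσ₁ ρ₁ hρ₁
  obtain rfl := eq_add_of_sub_eq' hσdiff
  obtain rfl := eq_add_of_sub_eq' hρdiff
  have hexpand := gradedComm_add_mul_add_mul hcentral (i * j) σ' σ₁ ρ' ρ₁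
  simp only [gradedComm, ht₁, ht₂, ht₃, ← hx, ← hx'] at hexpand
  refine exists_eq_mul_of_mul_eq_sq_mul hreg (b := t₁ + t₂ + ℏ * t₃) ?_
  rw [mul_sub, hexpand, pow_two]
  noncomm_ring

/-- Well-definedness of the generalized Poisson bracket on the quotient `Ω/ℏΩ` of an
ℕ-graded ring `Ω` by a central parameter `ℏ`: if `σ, σ'` and `ρ, ρ'` are homogeneous lifts
agreeing modulo `ℏ` (with homogeneous differences), and `ℏ x = [σ,ρ]`, `ℏ x' = [σ',ρ']`
(graded commutators), then `x - x' ∈ ℏΩ`. -/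
theorem metabracket_well_defined {Ω : Type*} [Ring Ω]
    (A : ℕ → AddSubgroup Ω) [GradedRing A]
    (ℏ : Ω) (hℏ0 : ℏ ∈ A 0) (hcentral : ∀ a : Ω, ℏ * a = a * ℏ)
    (hreg : ∀ σ : Ω, ℏ ^ 2 * σ = 0 → ∃ τ : Ω, σ = ℏ * τ)
    (hcomm : ∀ (i j : ℕ), ∀ σ ∈ A i, ∀ ρ ∈ A j,
      ∃ τ : Ω, σ * ρ - (-1 : Ω) ^ (i * j) * (ρ * σ) = ℏ * τ)
    (i j : ℕ)
    (σ σ' σ₁ : Ω) (hσ : σ ∈ A i) (hσ' : σ' ∈ A i) (hσ₁ : σ₁ ∈ A i)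
    (ρ ρ' ρ₁ : Ω) (hρ : ρ ∈ A j) (hρ' : ρ' ∈ A j) (hρ₁ : ρ₁ ∈ A j)
    (hσdiff : σ - σ' = ℏ * σ₁) (hρdiff : ρ - ρ' = ℏ * ρ₁)
    (x x' : Ω)
    (hx : ℏ * x = σ * ρ - (-1 : Ω) ^ (i * j) * (ρ * σ))
    (hx' : ℏ * x' = σ' * ρ' - (-1 : Ω) ^ (i * j) * (ρ' * σ')) :
    ∃ y : Ω, x - x' = ℏ * y :=
  metabracket_well_defined_general A ℏ hcentral hreg hcomm i j σ σ' σ₁ hσ' hσ₁ ρ ρ' ρ₁ hρ' hρ₁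
    hσdiff hρdiff x x' hx hx'
end

section
/- For all f, g ∈ A and all β, γ ∈ Ω¹, the metacurvature expression satisfies M(f, g·β, γ) = g·M(f, β, γ); that is, M(f, −, −) is A-linear in its second (and, by symmetry of P₁₁, its third) argument. (First half of the theorem that a flat torsion-free contravariant connection determines a metacurvature tensor.) -/
section ContravariantConnection

variable {A : Type*} [CommRing A]
  {Ω1 Ω2 : Type*} [AddCommGroup Ω1] [Module A Ω1] [AddCommGroup Ω2] [Module A Ω2]
  (w : Ω1 →ₗ[A] Ω1 →ₗ[A] Ω2) (P0 : A →+ A →+ A) (P1 : A →+ Ω1 →+ Ω1)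
  (P11 : Ω1 →+ Ω1 →+ Ω2) (P2 : A →+ Ω2 →+ Ω2)

theorem P11_smul_right
    (hP11P : ∀ (f : A) (β γ : Ω1), P11 (f • β) γ = f • P11 β γ + w β (P1 f γ))
    (hsymm : ∀ β γ : Ω1, P11 β γ = P11 γ β) (g : A) (α β : Ω1) :
    P11 α (g • β) = g • P11 β α + w β (P1 g α) := by
  rw [hsymm, hP11P]

theorem P2_P11_smul_left
    (hP11P : ∀ (f : A) (β γ : Ω1), P11 (f • β) γ = f • P11 β γ + w β (P1 f γ))
    (hP2L : ∀ (f g : A) (ω : Ω2), P2 f (g • ω) = P0 f g • ω + g • P2 f ω)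
    (hP2w : ∀ (f : A) (β γ : Ω1), P2 f (w β γ) = w (P1 f β) γ + w β (P1 f γ))
    (f g : A) (β γ : Ω1) :
    P2 f (P11 (g • β) γ) = P0 f g • P11 β γ + g • P2 f (P11 β γ)
      + w (P1 f β) (P1 g γ) + w β (P1 f (P1 g γ)) := by
  rw [hP11P, map_add, hP2L, hP2w]
  abel

theorem P11_P1_smul_left
    (hP1R : ∀ (f g : A) (β : Ω1), P1 f (g • β) = P0 f g • β + g • P1 f β)
    (hP11P : ∀ (f : A) (β γ : Ω1), P11 (f • β) γ = f • P11 β γ + w β (P1 f γ))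
    (f g : A) (β γ : Ω1) :
    P11 (P1 f (g • β)) γ = P0 f g • P11 β γ + w β (P1 (P0 f g) γ)
      + g • P11 (P1 f β) γ + w (P1 f β) (P1 g γ) := by
  rw [hP1R, map_add, AddMonoidHom.add_apply, hP11P, hP11P]
  abel

end ContravariantConnection

theorem metacurvature_linear_in_forms_general
    {A : Type*} [CommRing A]
    {Ω1 Ω2 : Type*} [AddCommGroup Ω1] [Module A Ω1] [AddCommGroup Ω2] [Module A Ω2]
    (w : Ω1 →ₗ[A] Ω1 →ₗ[A] Ω2)
    (P0 : A →+ A →+ A) (P1 : A →+ Ω1 →+ Ω1)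
    (P11 : Ω1 →+ Ω1 →+ Ω2) (P2 : A →+ Ω2 →+ Ω2)
    (hP1R : ∀ (f g : A) (β : Ω1), P1 f (g • β) = P0 f g • β + g • P1 f β)
    (hP11P : ∀ (f : A) (β γ : Ω1), P11 (f • β) γ = f • P11 β γ + w β (P1 f γ))
    (hP2L : ∀ (f g : A) (ω : Ω2), P2 f (g • ω) = P0 f g • ω + g • P2 f ω)
    (hP2w : ∀ (f : A) (β γ : Ω1), P2 f (w β γ) = w (P1 f β) γ + w β (P1 f γ))
    (hsymm : ∀ β γ : Ω1, P11 β γ = P11 γ β)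
    (hflat : ∀ (f g : A) (β : Ω1), P1 f (P1 g β) - P1 g (P1 f β) = P1 (P0 f g) β)
    (f g : A) (β γ : Ω1) :
    P2 f (P11 (g • β) γ) - P11 (P1 f (g • β)) γ - P11 (P1 f γ) (g • β)
      = g • (P2 f (P11 β γ) - P11 (P1 f β) γ - P11 (P1 f γ) β) := by
  rw [P2_P11_smul_left w P0 P1 P11 P2 hP11P hP2L hP2w,
    P11_P1_smul_left w P0 P1 P11 hP1R hP11P,
    P11_smul_right w P1 P11 hP11P hsymm, hsymm β (P1 f γ)]
  -- The defect is `w β (P1 f (P1 g γ) - P1 g (P1 f γ) - P1 (P0 f g) γ)`, which flatness kills.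
  have hdefect : w β (P1 f (P1 g γ)) - w β (P1 g (P1 f γ)) - w β (P1 (P0 f g) γ) = 0 := by
    rw [← map_sub, ← map_sub, hflat, sub_self, map_zero]
  linear_combination (norm := module) hdefect

/-- The metacurvature expression `M(f,β,γ) := P₂(f,P₁₁(β,γ)) − P₁₁(P₁(f,β),γ) − P₁₁(P₁(f,γ),β)`
of a flat, torsion-free contravariant connection is `A`-linear in its second argument:
`M(f, g•β, γ) = g • M(f, β, γ)`. -/
theorem metacurvature_linear_in_forms
    {A : Type*} [CommRing A]
    {Ω1 Ω2 : Type*} [AddCommGroup Ω1] [Module A Ω1] [AddCommGroup Ω2] [Module A Ω2]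
    (w : Ω1 →ₗ[A] Ω1 →ₗ[A] Ω2)
    (d0 : A →+ Ω1) (hd0 : ∀ f g : A, d0 (f * g) = f • d0 g + g • d0 f)
    (d1 : Ω1 →+ Ω2) (hd1d0 : ∀ f : A, d1 (d0 f) = 0)
    (P0 : A →+ A →+ A) (P1 : A →+ Ω1 →+ Ω1)
    (P11 : Ω1 →+ Ω1 →+ Ω2) (P2 : A →+ Ω2 →+ Ω2)
    (hP0 : ∀ f g h : A, P0 f (g * h) = g * P0 f h + h * P0 f g)
    (hP1L : ∀ (f g : A) (β : Ω1), P1 (f * g) β = f • P1 g β + g • P1 f β)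
    (hP1R : ∀ (f g : A) (β : Ω1), P1 f (g • β) = P0 f g • β + g • P1 f β)
    (hP11P : ∀ (f : A) (β γ : Ω1), P11 (f • β) γ = f • P11 β γ + w β (P1 f γ))
    (hP2L : ∀ (f g : A) (ω : Ω2), P2 f (g • ω) = P0 f g • ω + g • P2 f ω)
    (hP2w : ∀ (f : A) (β γ : Ω1), P2 f (w β γ) = w (P1 f β) γ + w β (P1 f γ))
    (hsymm : ∀ β γ : Ω1, P11 β γ = P11 γ β)
    (hflat : ∀ (f g : A) (β : Ω1), P1 f (P1 g β) - P1 g (P1 f β) = P1 (P0 f g) β)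
    (htf : ∀ f g : A, P1 f (d0 g) - P1 g (d0 f) = d0 (P0 f g))
    (hLeib : ∀ (f : A) (β : Ω1), d1 (P1 f β) = P11 (d0 f) β + P2 f (d1 β))
    (f g : A) (β γ : Ω1) :
    P2 f (P11 (g • β) γ) - P11 (P1 f (g • β)) γ - P11 (P1 f γ) (g • β)
      = g • (P2 f (P11 β γ) - P11 (P1 f β) γ - P11 (P1 f γ) β) :=
  metacurvature_linear_in_forms_general w P0 P1 P11 P2 hP1R hP11P hP2L hP2w hsymm hflat f g β γ
end

section
/- For all f, g, h ∈ A, the metacurvature expression on exact 1-forms is symmetric in its first two arguments: M(f, d₀g, d₀h) = M(g, d₀f, d₀h). (Second half of the theorem that a flat torsion-free contravariant connection determines a metacurvature tensor, symmetric in the contravariant indices.) -/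
/-!
Apply `d₁` to the flatness identity evaluated on the exact form `d₀h`. The Leibniz identity
together with `d₁ ∘ d₀ = 0` expands both sides into `P₁₁` and `P₂` terms, torsion-freeness
rewrites `d₀(P₀(f,g))` on the right as `P₁(f,d₀g) − P₁(g,d₀f)`, and the symmetry of `P₁₁`
turns the resulting identity into `M(f,d₀g,d₀h) = M(g,d₀f,d₀h)`.
-/

section

variable {A Ω1 Ω2 : Type*} [AddCommGroup A] [AddCommGroup Ω1] [AddCommGroup Ω2]
  {d0 : A →+ Ω1} {d1 : Ω1 →+ Ω2} {P1 : A →+ Ω1 →+ Ω1} {P11 : Ω1 →+ Ω1 →+ Ω2}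
  {P2 : A →+ Ω2 →+ Ω2}

theorem d1_P1_d0 (hd1d0 : ∀ f : A, d1 (d0 f) = 0)
    (hLeib : ∀ (f : A) (β : Ω1), d1 (P1 f β) = P11 (d0 f) β + P2 f (d1 β)) (f h : A) :
    d1 (P1 f (d0 h)) = P11 (d0 f) (d0 h) := by
  rw [hLeib, hd1d0, map_zero, add_zero]

theorem d1_P1_P1_d0 (hd1d0 : ∀ f : A, d1 (d0 f) = 0)
    (hLeib : ∀ (f : A) (β : Ω1), d1 (P1 f β) = P11 (d0 f) β + P2 f (d1 β)) (f g h : A) :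
    d1 (P1 f (P1 g (d0 h))) = P11 (d0 f) (P1 g (d0 h)) + P2 f (P11 (d0 g) (d0 h)) := by
  rw [hLeib, d1_P1_d0 hd1d0 hLeib]

theorem d1_flatness_d0 {P0 : A →+ A →+ A} (hd1d0 : ∀ f : A, d1 (d0 f) = 0)
    (hflat : ∀ (f g : A) (β : Ω1), P1 f (P1 g β) - P1 g (P1 f β) = P1 (P0 f g) β)
    (htf : ∀ f g : A, P1 f (d0 g) - P1 g (d0 f) = d0 (P0 f g))
    (hLeib : ∀ (f : A) (β : Ω1), d1 (P1 f β) = P11 (d0 f) β + P2 f (d1 β)) (f g h : A) :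
    P11 (d0 f) (P1 g (d0 h)) + P2 f (P11 (d0 g) (d0 h))
        - (P11 (d0 g) (P1 f (d0 h)) + P2 g (P11 (d0 f) (d0 h)))
      = P11 (P1 f (d0 g)) (d0 h) - P11 (P1 g (d0 f)) (d0 h) := by
  rw [← d1_P1_P1_d0 hd1d0 hLeib, ← d1_P1_P1_d0 hd1d0 hLeib, ← map_sub, hflat,
    d1_P1_d0 hd1d0 hLeib, ← htf, map_sub, AddMonoidHom.sub_apply]

end

theorem metacurvature_symm_exact_general
    {A : Type*} [CommRing A]
    {Ω1 Ω2 : Type*} [AddCommGroup Ω1] [AddCommGroup Ω2]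
    (d0 : A →+ Ω1)
    (d1 : Ω1 →+ Ω2) (hd1d0 : ∀ f : A, d1 (d0 f) = 0)
    (P0 : A →+ A →+ A) (P1 : A →+ Ω1 →+ Ω1)
    (P11 : Ω1 →+ Ω1 →+ Ω2) (P2 : A →+ Ω2 →+ Ω2)
    (hsymm : ∀ β γ : Ω1, P11 β γ = P11 γ β)
    (hflat : ∀ (f g : A) (β : Ω1), P1 f (P1 g β) - P1 g (P1 f β) = P1 (P0 f g) β)
    (htf : ∀ f g : A, P1 f (d0 g) - P1 g (d0 f) = d0 (P0 f g))
    (hLeib : ∀ (f : A) (β : Ω1), d1 (P1 f β) = P11 (d0 f) β + P2 f (d1 β))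
    (f g h : A) :
    P2 f (P11 (d0 g) (d0 h)) - P11 (P1 f (d0 g)) (d0 h) - P11 (P1 f (d0 h)) (d0 g)
      = P2 g (P11 (d0 f) (d0 h)) - P11 (P1 g (d0 f)) (d0 h) - P11 (P1 g (d0 h)) (d0 f) := by
  have key := d1_flatness_d0 hd1d0 hflat htf hLeib f g h
  rw [hsymm (P1 f (d0 h)), hsymm (P1 g (d0 h))]
  linear_combination (norm := abel) key

/-- The metacurvature expression `M(f,β,γ) := P₂(f,P₁₁(β,γ)) − P₁₁(P₁(f,β),γ) − P₁₁(P₁(f,γ),β)`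
is symmetric in its first two arguments on exact 1-forms: `M(f, d₀g, d₀h) = M(g, d₀f, d₀h)`. -/
theorem metacurvature_symm_exact
    {A : Type*} [CommRing A]
    {Ω1 Ω2 : Type*} [AddCommGroup Ω1] [Module A Ω1] [AddCommGroup Ω2] [Module A Ω2]
    (w : Ω1 →ₗ[A] Ω1 →ₗ[A] Ω2)
    (d0 : A →+ Ω1) (hd0 : ∀ f g : A, d0 (f * g) = f • d0 g + g • d0 f)
    (d1 : Ω1 →+ Ω2) (hd1d0 : ∀ f : A, d1 (d0 f) = 0)
    (P0 : A →+ A →+ A) (P1 : A →+ Ω1 →+ Ω1)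
    (P11 : Ω1 →+ Ω1 →+ Ω2) (P2 : A →+ Ω2 →+ Ω2)
    (hP0 : ∀ f g h : A, P0 f (g * h) = g * P0 f h + h * P0 f g)
    (hP1L : ∀ (f g : A) (β : Ω1), P1 (f * g) β = f • P1 g β + g • P1 f β)
    (hP1R : ∀ (f g : A) (β : Ω1), P1 f (g • β) = P0 f g • β + g • P1 f β)
    (hP11P : ∀ (f : A) (β γ : Ω1), P11 (f • β) γ = f • P11 β γ + w β (P1 f γ))
    (hP2L : ∀ (f g : A) (ω : Ω2), P2 f (g • ω) = P0 f g • ω + g • P2 f ω)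
    (hP2w : ∀ (f : A) (β γ : Ω1), P2 f (w β γ) = w (P1 f β) γ + w β (P1 f γ))
    (hsymm : ∀ β γ : Ω1, P11 β γ = P11 γ β)
    (hflat : ∀ (f g : A) (β : Ω1), P1 f (P1 g β) - P1 g (P1 f β) = P1 (P0 f g) β)
    (htf : ∀ f g : A, P1 f (d0 g) - P1 g (d0 f) = d0 (P0 f g))
    (hLeib : ∀ (f : A) (β : Ω1), d1 (P1 f β) = P11 (d0 f) β + P2 f (d1 β))
    (f g h : A) :
    P2 f (P11 (d0 g) (d0 h)) - P11 (P1 f (d0 g)) (d0 h) - P11 (P1 f (d0 h)) (d0 g)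
      = P2 g (P11 (d0 f) (d0 h)) - P11 (P1 g (d0 f)) (d0 h) - P11 (P1 g (d0 h)) (d0 f) :=
  metacurvature_symm_exact_general d0 d1 hd1d0 P0 P1 P11 P2 hsymm hflat htf hLeib f g h
end

section
/- Assume additionally that every element of Ω¹ is a finite sum of elements of the form f·d₀g with f, g ∈ A. Then for all f, g ∈ A and β, γ ∈ Ω¹ the metacurvature expression satisfies M(fg, β, γ) = f·M(g, β, γ) + g·M(f, β, γ); that is, M(f, β, γ) depends on f only through d₀f and does so A-linearly. (Together with the linearity in β and γ, this shows the metacurvature is a tensor M^{ijk}_{lm}, symmetric in the contravariant indices and antisymmetric in the covariant indices.) -/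
/-!
For fixed `f`, `M(f, β, γ)` is `A`-bilinear in `(β, γ)` (by the product identities and flatness)
and symmetric. On exact forms it is moreover cyclic, `M(f, db, dc) = M(b, dc, df)`: expanding
`P₁₁(dx, dy) = d₁ P₁(x, dy)` with the Leibniz identity, flatness and torsion-freeness make all
other terms cancel. The rotation moves `fg` into a slot where `M` is linear, so
`M(fg, db, dc) = M(b, dc, f dg + g df) = f M(g, db, dc) + g M(f, db, dc)`, and since exact forms
span `Ω¹` the identity extends to all `β, γ`.
-/

section Metacurvature

variable {A : Type*} [CommRing A] {Ω1 Ω2 : Type*} [AddCommGroup Ω1] [AddCommGroup Ω2]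

def metacurvature (P1 : A →+ Ω1 →+ Ω1) (P11 : Ω1 →+ Ω1 →+ Ω2) (P2 : A →+ Ω2 →+ Ω2)
    (f : A) (β γ : Ω1) : Ω2 :=
  P2 f (P11 β γ) - P11 (P1 f β) γ - P11 (P1 f γ) β

variable {d0 : A →+ Ω1} {d1 : Ω1 →+ Ω2} {P1 : A →+ Ω1 →+ Ω1} {P11 : Ω1 →+ Ω1 →+ Ω2}
  {P2 : A →+ Ω2 →+ Ω2}

theorem metacurvature_comm (hsymm : ∀ β γ : Ω1, P11 β γ = P11 γ β) (f : A) (β γ : Ω1) :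
    metacurvature P1 P11 P2 f β γ = metacurvature P1 P11 P2 f γ β := by
  rw [metacurvature, metacurvature, hsymm β γ]
  abel

theorem metacurvature_add_left (f : A) (β β' γ : Ω1) :
    metacurvature P1 P11 P2 f (β + β') γ
      = metacurvature P1 P11 P2 f β γ + metacurvature P1 P11 P2 f β' γ := by
  simp only [metacurvature, map_add, AddMonoidHom.add_apply]
  abel

theorem metacurvature_smul_left [Module A Ω1] [Module A Ω2] {w : Ω1 →ₗ[A] Ω1 →ₗ[A] Ω2}
    {P0 : A →+ A →+ A}
    (hP1R : ∀ (f g : A) (β : Ω1), P1 f (g • β) = P0 f g • β + g • P1 f β)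
    (hP11P : ∀ (f : A) (β γ : Ω1), P11 (f • β) γ = f • P11 β γ + w β (P1 f γ))
    (hP2L : ∀ (f g : A) (ω : Ω2), P2 f (g • ω) = P0 f g • ω + g • P2 f ω)
    (hP2w : ∀ (f : A) (β γ : Ω1), P2 f (w β γ) = w (P1 f β) γ + w β (P1 f γ))
    (hsymm : ∀ β γ : Ω1, P11 β γ = P11 γ β)
    (hflat : ∀ (f g : A) (β : Ω1), P1 f (P1 g β) - P1 g (P1 f β) = P1 (P0 f g) β)
    (f a : A) (β γ : Ω1) :
    metacurvature P1 P11 P2 f (a • β) γ = a • metacurvature P1 P11 P2 f β γ := by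
  have hP11R (c : A) (β γ : Ω1) : P11 β (c • γ) = c • P11 β γ + w γ (P1 c β) := by
    rw [hsymm, hP11P, hsymm]
  have hflat' : P1 f (P1 a γ) = P1 (P0 f a) γ + P1 a (P1 f γ) :=
    sub_eq_iff_eq_add.mp (hflat f a γ)
  rw [metacurvature, metacurvature, hP11P, map_add, hP2L, hP2w, hP1R, map_add,
    AddMonoidHom.add_apply, hP11P, hP11P, hP11R, hflat', map_add]
  simp only [smul_sub]
  abel

theorem P11_d0_d0 (hd1d0 : ∀ f : A, d1 (d0 f) = 0)
    (hLeib : ∀ (f : A) (β : Ω1), d1 (P1 f β) = P11 (d0 f) β + P2 f (d1 β)) (f g : A) :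
    P11 (d0 f) (d0 g) = d1 (P1 f (d0 g)) := by
  rw [hLeib, hd1d0, map_zero, add_zero]

theorem metacurvature_exact_rotate {P0 : A →+ A →+ A}
    (hd1d0 : ∀ f : A, d1 (d0 f) = 0)
    (hsymm : ∀ β γ : Ω1, P11 β γ = P11 γ β)
    (hflat : ∀ (f g : A) (β : Ω1), P1 f (P1 g β) - P1 g (P1 f β) = P1 (P0 f g) β)
    (htf : ∀ f g : A, P1 f (d0 g) - P1 g (d0 f) = d0 (P0 f g))
    (hLeib : ∀ (f : A) (β : Ω1), d1 (P1 f β) = P11 (d0 f) β + P2 f (d1 β))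
    (f b c : A) :
    metacurvature P1 P11 P2 f (d0 b) (d0 c) = metacurvature P1 P11 P2 b (d0 c) (d0 f) := by
  have hexact := P11_d0_d0 hd1d0 hLeib
  have htf' (x y : A) : P1 x (d0 y) = d0 (P0 x y) + P1 y (d0 x) :=
    sub_eq_iff_eq_add.mp (htf x y)
  have hflat' : P1 f (P1 b (d0 c)) = P1 (P0 f b) (d0 c) + P1 b (P1 f (d0 c)) :=
    sub_eq_iff_eq_add.mp (hflat f b (d0 c))
  have hP2 : P2 f (P11 (d0 b) (d0 c))
      = d1 (P1 f (P1 b (d0 c))) - P11 (d0 f) (P1 b (d0 c)) := by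
    rw [hexact b c, hLeib f (P1 b (d0 c))]
    abel
  have hd1 : d1 (P1 f (P1 b (d0 c))) = P11 (d0 (P0 f b)) (d0 c) + P11 (d0 b) (d0 (P0 f c))
      + P11 (d0 b) (P1 c (d0 f)) + P2 b (P11 (d0 c) (d0 f)) := by
    rw [hflat', htf' f c, map_add (P1 b), map_add d1, map_add d1, ← hexact (P0 f b) c,
      ← hexact b (P0 f c), hLeib b (P1 c (d0 f)), ← hexact c f]
    abel
  rw [metacurvature, metacurvature, hP2, hd1, htf' f b, htf' f c]
  simp only [map_add, AddMonoidHom.add_apply]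
  rw [hsymm (d0 b) (d0 (P0 f c)), hsymm (d0 b) (P1 c (d0 f)), hsymm (d0 f) (P1 b (d0 c))]
  abel

def metacurvatureBilin [Module A Ω1] [Module A Ω2] {w : Ω1 →ₗ[A] Ω1 →ₗ[A] Ω2}
    {P0 : A →+ A →+ A}
    (hP1R : ∀ (f g : A) (β : Ω1), P1 f (g • β) = P0 f g • β + g • P1 f β)
    (hP11P : ∀ (f : A) (β γ : Ω1), P11 (f • β) γ = f • P11 β γ + w β (P1 f γ))
    (hP2L : ∀ (f g : A) (ω : Ω2), P2 f (g • ω) = P0 f g • ω + g • P2 f ω)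
    (hP2w : ∀ (f : A) (β γ : Ω1), P2 f (w β γ) = w (P1 f β) γ + w β (P1 f γ))
    (hsymm : ∀ β γ : Ω1, P11 β γ = P11 γ β)
    (hflat : ∀ (f g : A) (β : Ω1), P1 f (P1 g β) - P1 g (P1 f β) = P1 (P0 f g) β)
    (f : A) : Ω1 →ₗ[A] Ω1 →ₗ[A] Ω2 :=
  LinearMap.mk₂ A (metacurvature P1 P11 P2 f) (metacurvature_add_left f)
    (metacurvature_smul_left hP1R hP11P hP2L hP2w hsymm hflat f)
    (fun β γ γ' => by
      rw [metacurvature_comm hsymm, metacurvature_add_left, metacurvature_comm hsymm f γ,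
        metacurvature_comm hsymm f γ'])
    (fun a β γ => by
      rw [metacurvature_comm hsymm, metacurvature_smul_left hP1R hP11P hP2L hP2w hsymm hflat,
        metacurvature_comm hsymm f γ])

end Metacurvature

theorem metacurvature_derivation_in_function_general
    {A : Type*} [CommRing A]
    {Ω1 Ω2 : Type*} [AddCommGroup Ω1] [Module A Ω1] [AddCommGroup Ω2] [Module A Ω2]
    (w : Ω1 →ₗ[A] Ω1 →ₗ[A] Ω2)
    (d0 : A →+ Ω1) (hd0 : ∀ f g : A, d0 (f * g) = f • d0 g + g • d0 f)
    (d1 : Ω1 →+ Ω2) (hd1d0 : ∀ f : A, d1 (d0 f) = 0)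
    (P0 : A →+ A →+ A) (P1 : A →+ Ω1 →+ Ω1)
    (P11 : Ω1 →+ Ω1 →+ Ω2) (P2 : A →+ Ω2 →+ Ω2)
    (hP1R : ∀ (f g : A) (β : Ω1), P1 f (g • β) = P0 f g • β + g • P1 f β)
    (hP11P : ∀ (f : A) (β γ : Ω1), P11 (f • β) γ = f • P11 β γ + w β (P1 f γ))
    (hP2L : ∀ (f g : A) (ω : Ω2), P2 f (g • ω) = P0 f g • ω + g • P2 f ω)
    (hP2w : ∀ (f : A) (β γ : Ω1), P2 f (w β γ) = w (P1 f β) γ + w β (P1 f γ))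
    (hsymm : ∀ β γ : Ω1, P11 β γ = P11 γ β)
    (hflat : ∀ (f g : A) (β : Ω1), P1 f (P1 g β) - P1 g (P1 f β) = P1 (P0 f g) β)
    (htf : ∀ f g : A, P1 f (d0 g) - P1 g (d0 f) = d0 (P0 f g))
    (hLeib : ∀ (f : A) (β : Ω1), d1 (P1 f β) = P11 (d0 f) β + P2 f (d1 β))
    (hgen : ∀ β : Ω1, β ∈ Submodule.span A (Set.range (d0 : A → Ω1)))
    (f g : A) (β γ : Ω1) :
    P2 (f * g) (P11 β γ) - P11 (P1 (f * g) β) γ - P11 (P1 (f * g) γ) β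
      = f • (P2 g (P11 β γ) - P11 (P1 g β) γ - P11 (P1 g γ) β)
        + g • (P2 f (P11 β γ) - P11 (P1 f β) γ - P11 (P1 f γ) β) := by
  set M := metacurvatureBilin hP1R hP11P hP2L hP2w hsymm hflat
  have hM (h : A) (β γ : Ω1) : M h β γ = metacurvature P1 P11 P2 h β γ := rfl
  have hrot := metacurvature_exact_rotate hd1d0 hsymm hflat htf hLeib
  have hspan : Submodule.span A (Set.range d0) = ⊤ := Submodule.eq_top_iff'.2 hgen
  have hderiv : M (f * g) = f • M g + g • M f := by
    refine LinearMap.ext_on_range hspan fun b => LinearMap.ext_on_range hspan fun c => ?_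
    simp only [LinearMap.add_apply, LinearMap.smul_apply, hM, hrot _ b c]
    rw [← hM, hd0, map_add, map_smul, map_smul, hM, hM]
  exact LinearMap.congr_fun₂ hderiv β γ

/-- If `Ω¹` is generated over `A` by exact 1-forms, then the metacurvature expression
`M(f,β,γ) := P₂(f,P₁₁(β,γ)) − P₁₁(P₁(f,β),γ) − P₁₁(P₁(f,γ),β)` is a derivation in `f`:
`M(fg, β, γ) = f • M(g,β,γ) + g • M(f,β,γ)`, so `M` depends on `f` only through `d₀f`,
`A`-linearly. -/
theorem metacurvature_derivation_in_function
    {A : Type*} [CommRing A]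
    {Ω1 Ω2 : Type*} [AddCommGroup Ω1] [Module A Ω1] [AddCommGroup Ω2] [Module A Ω2]
    (w : Ω1 →ₗ[A] Ω1 →ₗ[A] Ω2)
    (d0 : A →+ Ω1) (hd0 : ∀ f g : A, d0 (f * g) = f • d0 g + g • d0 f)
    (d1 : Ω1 →+ Ω2) (hd1d0 : ∀ f : A, d1 (d0 f) = 0)
    (P0 : A →+ A →+ A) (P1 : A →+ Ω1 →+ Ω1)
    (P11 : Ω1 →+ Ω1 →+ Ω2) (P2 : A →+ Ω2 →+ Ω2)
    (hP0 : ∀ f g h : A, P0 f (g * h) = g * P0 f h + h * P0 f g)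
    (hP1L : ∀ (f g : A) (β : Ω1), P1 (f * g) β = f • P1 g β + g • P1 f β)
    (hP1R : ∀ (f g : A) (β : Ω1), P1 f (g • β) = P0 f g • β + g • P1 f β)
    (hP11P : ∀ (f : A) (β γ : Ω1), P11 (f • β) γ = f • P11 β γ + w β (P1 f γ))
    (hP2L : ∀ (f g : A) (ω : Ω2), P2 f (g • ω) = P0 f g • ω + g • P2 f ω)
    (hP2w : ∀ (f : A) (β γ : Ω1), P2 f (w β γ) = w (P1 f β) γ + w β (P1 f γ))
    (hsymm : ∀ β γ : Ω1, P11 β γ = P11 γ β)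
    (hflat : ∀ (f g : A) (β : Ω1), P1 f (P1 g β) - P1 g (P1 f β) = P1 (P0 f g) β)
    (htf : ∀ f g : A, P1 f (d0 g) - P1 g (d0 f) = d0 (P0 f g))
    (hLeib : ∀ (f : A) (β : Ω1), d1 (P1 f β) = P11 (d0 f) β + P2 f (d1 β))
    (hgen : ∀ β : Ω1, β ∈ Submodule.span A (Set.range (d0 : A → Ω1)))
    (f g : A) (β γ : Ω1) :
    P2 (f * g) (P11 β γ) - P11 (P1 (f * g) β) γ - P11 (P1 (f * g) γ) β
      = f • (P2 g (P11 β γ) - P11 (P1 g β) γ - P11 (P1 g γ) β)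
        + g • (P2 f (P11 β γ) - P11 (P1 f β) γ - P11 (P1 f γ) β) :=
  metacurvature_derivation_in_function_general w d0 hd0 d1 hd1d0 P0 P1 P11 P2 hP1R hP11P hP2L hP2w
    hsymm hflat htf hLeib hgen f g β γ
end

section
/- Suppose Q and Q′ are two symmetric biadditive maps Ω¹ × Ω¹ → Ω², each satisfying the product identity Q(f·β, γ) = f·Q(β,γ) + β ∧ P₁(f,γ) and the Leibniz identity d₁(P₁(f,β)) = Q(d₀f, β) + P₂(f, d₁β) for all f ∈ A and β, γ ∈ Ω¹. If every element of Ω¹ is a finite sum of elements of the form f·d₀g with f, g ∈ A, then Q = Q′. (The product and Leibniz identities uniquely determine the generalized Poisson bracket of two 1-forms.) -/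
/-! The Leibniz identity determines `Q (d₀ f) γ` as `d₁ (P₁ f γ) - P₂ f (d₁ γ)`, so `Q` and `Q'`
agree when the first argument is exact. The product identity has the same inhomogeneous term
`β ∧ P₁ f γ` for both, so `Q - Q'` is `A`-linear in the first argument, and it vanishes on the
span of the exact forms, which is all of `Ω¹`. -/

theorem AddMonoidHom.eqOn_span_of_smul_sub_eq {A M P : Type*} [Semiring A]
    [AddCommMonoid M] [Module A M] [AddCommGroup P] [Module A P] {s : Set M} (Q Q' : M →+ P)
    (hsmul : ∀ (f : A) (β : M), Q (f • β) - f • Q β = Q' (f • β) - f • Q' β)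
    (hs : Set.EqOn Q Q' s) : Set.EqOn Q Q' (Submodule.span A s) := by
  intro β hβ
  induction hβ using Submodule.span_induction with
  | mem x hx => exact hs hx
  | zero => simp
  | add x y _ _ hx hy => rw [map_add, map_add, hx, hy]
  | smul f x _ hx =>
    rw [← sub_add_cancel (Q (f • x)) (f • Q x), ← sub_add_cancel (Q' (f • x)) (f • Q' x),
      hsmul, hx]

theorem oneform_bracket_unique_general
    {A : Type*} [CommRing A]
    {Ω1 Ω2 : Type*} [AddCommGroup Ω1] [Module A Ω1] [AddCommGroup Ω2] [Module A Ω2]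
    (w : Ω1 →ₗ[A] Ω1 →ₗ[A] Ω2)
    (d0 : A →+ Ω1)
    (d1 : Ω1 →+ Ω2)
    (P1 : A →+ Ω1 →+ Ω1) (P2 : A →+ Ω2 →+ Ω2)
    (Q Q' : Ω1 →+ Ω1 →+ Ω2)
    (hQprod : ∀ (f : A) (β γ : Ω1), Q (f • β) γ = f • Q β γ + w β (P1 f γ))
    (hQ'prod : ∀ (f : A) (β γ : Ω1), Q' (f • β) γ = f • Q' β γ + w β (P1 f γ))
    (hQLeib : ∀ (f : A) (β : Ω1), d1 (P1 f β) = Q (d0 f) β + P2 f (d1 β))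
    (hQ'Leib : ∀ (f : A) (β : Ω1), d1 (P1 f β) = Q' (d0 f) β + P2 f (d1 β))
    (hgen : ∀ β : Ω1, β ∈ Submodule.span A (Set.range (d0 : A → Ω1))) :
    ∀ β γ : Ω1, Q β γ = Q' β γ := by
  intro β γ
  have hexact : ∀ f : A, Q (d0 f) γ = Q' (d0 f) γ := fun f =>
    add_right_cancel ((hQLeib f γ).symm.trans (hQ'Leib f γ))
  refine AddMonoidHom.eqOn_span_of_smul_sub_eq (Q.flip γ) (Q'.flip γ) (fun f β => ?_) ?_ (hgen β)
  · simp only [AddMonoidHom.flip_apply, hQprod, hQ'prod, add_sub_cancel_left]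
  · rintro _ ⟨f, rfl⟩
    exact hexact f

/-- The product and Leibniz identities uniquely determine the generalized Poisson bracket
of two 1-forms: if `Q` and `Q'` are symmetric biadditive maps `Ω¹ × Ω¹ → Ω²` each satisfying
`Q(f•β,γ) = f•Q(β,γ) + β ∧ P₁(f,γ)` and `d₁(P₁(f,β)) = Q(d₀f,β) + P₂(f,d₁β)`, and `Ω¹` is
generated over `A` by exact 1-forms, then `Q = Q'`. -/
theorem oneform_bracket_unique
    {A : Type*} [CommRing A]
    {Ω1 Ω2 : Type*} [AddCommGroup Ω1] [Module A Ω1] [AddCommGroup Ω2] [Module A Ω2]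
    (w : Ω1 →ₗ[A] Ω1 →ₗ[A] Ω2)
    (d0 : A →+ Ω1) (hd0 : ∀ f g : A, d0 (f * g) = f • d0 g + g • d0 f)
    (d1 : Ω1 →+ Ω2) (hd1d0 : ∀ f : A, d1 (d0 f) = 0)
    (P0 : A →+ A →+ A) (P1 : A →+ Ω1 →+ Ω1) (P2 : A →+ Ω2 →+ Ω2)
    (hP0 : ∀ f g h : A, P0 f (g * h) = g * P0 f h + h * P0 f g)
    (hP1L : ∀ (f g : A) (β : Ω1), P1 (f * g) β = f • P1 g β + g • P1 f β)
    (hP1R : ∀ (f g : A) (β : Ω1), P1 f (g • β) = P0 f g • β + g • P1 f β)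
    (hP2L : ∀ (f g : A) (ω : Ω2), P2 f (g • ω) = P0 f g • ω + g • P2 f ω)
    (hP2w : ∀ (f : A) (β γ : Ω1), P2 f (w β γ) = w (P1 f β) γ + w β (P1 f γ))
    (hflat : ∀ (f g : A) (β : Ω1), P1 f (P1 g β) - P1 g (P1 f β) = P1 (P0 f g) β)
    (htf : ∀ f g : A, P1 f (d0 g) - P1 g (d0 f) = d0 (P0 f g))
    (Q Q' : Ω1 →+ Ω1 →+ Ω2)
    (hQsymm : ∀ β γ : Ω1, Q β γ = Q γ β)
    (hQ'symm : ∀ β γ : Ω1, Q' β γ = Q' γ β)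
    (hQprod : ∀ (f : A) (β γ : Ω1), Q (f • β) γ = f • Q β γ + w β (P1 f γ))
    (hQ'prod : ∀ (f : A) (β γ : Ω1), Q' (f • β) γ = f • Q' β γ + w β (P1 f γ))
    (hQLeib : ∀ (f : A) (β : Ω1), d1 (P1 f β) = Q (d0 f) β + P2 f (d1 β))
    (hQ'Leib : ∀ (f : A) (β : Ω1), d1 (P1 f β) = Q' (d0 f) β + P2 f (d1 β))
    (hgen : ∀ β : Ω1, β ∈ Submodule.span A (Set.range (d0 : A → Ω1))) :
    ∀ β γ : Ω1, Q β γ = Q' β γ :=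
  oneform_bracket_unique_general w d0 d1 P1 P2 Q Q' hQprod hQ'prod hQLeib hQ'Leib hgen
end

section
/- Suppose α ∈ Ω¹ satisfies P₁(f, α) = 0 for all f ∈ A (i.e. α is contravariantly constant, {f,α} = 0). Then for all f, g ∈ A one has P₁₁(f·d₀g, α) = −f·P₂(g, d₁α). Consequently, for every β ∈ Ω¹ that is a finite sum Σᵢ fᵢ·d₀gᵢ, the bracket of β with α is {β,α} = −Σᵢ fᵢ·P₂(gᵢ, d₁α), the negative of the contravariant derivative of d₁α along β. (Key step in the computation of the metacurvature of a symplectic manifold, Theorem 'symplectic.M'.) -/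
/-!
Since `P₁(g, α) = 0`, the Leibniz identity collapses to `P₁₁(d₀g, α) = -P₂(g, d₁α)`, and the
product rule `P₁₁(f β, α) = f P₁₁(β, α) + β ∧ P₁(f, α)` loses its correction term, so
`P₁₁(·, α)` is `A`-linear and the claims follow by linearity.
-/

section ConstantForm

variable {A Ω1 Ω2 : Type*} [CommRing A] [AddCommGroup Ω1] [AddCommGroup Ω2]
  {P1 : A →+ Ω1 →+ Ω1} {P11 : Ω1 →+ Ω1 →+ Ω2} {α : Ω1}

theorem bracket_d0_left_of_const {d0 : A →+ Ω1} {d1 : Ω1 →+ Ω2} {P2 : A →+ Ω2 →+ Ω2}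
    (hLeib : ∀ (f : A) (β : Ω1), d1 (P1 f β) = P11 (d0 f) β + P2 f (d1 β))
    (hα : ∀ f : A, P1 f α = 0) (g : A) :
    P11 (d0 g) α = -P2 g (d1 α) := by
  have h := hLeib g α
  rw [hα, map_zero] at h
  exact eq_neg_of_add_eq_zero_left h.symm

variable [Module A Ω1] [Module A Ω2]

theorem bracket_smul_left_of_const (w : Ω1 →ₗ[A] Ω1 →ₗ[A] Ω2)
    (hP11P : ∀ (f : A) (β γ : Ω1), P11 (f • β) γ = f • P11 β γ + w β (P1 f γ))
    (hα : ∀ f : A, P1 f α = 0) (f : A) (β : Ω1) :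
    P11 (f • β) α = f • P11 β α := by
  rw [hP11P, hα, map_zero, add_zero]

theorem bracket_sum_smul_left_of_const (w : Ω1 →ₗ[A] Ω1 →ₗ[A] Ω2)
    (hP11P : ∀ (f : A) (β γ : Ω1), P11 (f • β) γ = f • P11 β γ + w β (P1 f γ))
    (hα : ∀ f : A, P1 f α = 0) {ι : Type*} (s : Finset ι) (F : ι → A) (β : ι → Ω1) :
    P11 (∑ i ∈ s, F i • β i) α = ∑ i ∈ s, F i • P11 (β i) α := by
  simp only [map_sum, AddMonoidHom.finsetSum_apply,
    bracket_smul_left_of_const w hP11P hα]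

end ConstantForm

theorem bracket_with_constant_form_general
    {A : Type*} [CommRing A]
    {Ω1 Ω2 : Type*} [AddCommGroup Ω1] [Module A Ω1] [AddCommGroup Ω2] [Module A Ω2]
    (w : Ω1 →ₗ[A] Ω1 →ₗ[A] Ω2)
    (d0 : A →+ Ω1)
    (d1 : Ω1 →+ Ω2)
    (P1 : A →+ Ω1 →+ Ω1)
    (P11 : Ω1 →+ Ω1 →+ Ω2) (P2 : A →+ Ω2 →+ Ω2)
    (hP11P : ∀ (f : A) (β γ : Ω1), P11 (f • β) γ = f • P11 β γ + w β (P1 f γ))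
    (hLeib : ∀ (f : A) (β : Ω1), d1 (P1 f β) = P11 (d0 f) β + P2 f (d1 β))
    (α : Ω1) (hα : ∀ f : A, P1 f α = 0) :
    (∀ f g : A, P11 (f • d0 g) α = -(f • P2 g (d1 α))) ∧
    (∀ (n : ℕ) (F G : Fin n → A),
      P11 (∑ i, F i • d0 (G i)) α = -∑ i, F i • P2 (G i) (d1 α)) := by
  have hbracket_d0 : ∀ g : A, P11 (d0 g) α = -P2 g (d1 α) := bracket_d0_left_of_const hLeib hα
  refine ⟨fun f g => ?_, fun n F G => ?_⟩
  · rw [bracket_smul_left_of_const w hP11P hα, hbracket_d0, smul_neg]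
  · simp only [bracket_sum_smul_left_of_const w hP11P hα, hbracket_d0, smul_neg,
      Finset.sum_neg_distrib]

/-- If `α` is contravariantly constant (`P₁(f,α) = 0` for all `f`), then
`P₁₁(f • d₀g, α) = −f • P₂(g, d₁α)`, and consequently for every 1-form `β = Σᵢ fᵢ • d₀gᵢ`
the bracket with `α` is `{β,α} = −Σᵢ fᵢ • P₂(gᵢ, d₁α)`, the negative of the contravariant
derivative of `d₁α` along `β`. -/
theorem bracket_with_constant_form
    {A : Type*} [CommRing A]
    {Ω1 Ω2 : Type*} [AddCommGroup Ω1] [Module A Ω1] [AddCommGroup Ω2] [Module A Ω2]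
    (w : Ω1 →ₗ[A] Ω1 →ₗ[A] Ω2)
    (d0 : A →+ Ω1) (hd0 : ∀ f g : A, d0 (f * g) = f • d0 g + g • d0 f)
    (d1 : Ω1 →+ Ω2) (hd1d0 : ∀ f : A, d1 (d0 f) = 0)
    (P0 : A →+ A →+ A) (P1 : A →+ Ω1 →+ Ω1)
    (P11 : Ω1 →+ Ω1 →+ Ω2) (P2 : A →+ Ω2 →+ Ω2)
    (hP0 : ∀ f g h : A, P0 f (g * h) = g * P0 f h + h * P0 f g)
    (hP1L : ∀ (f g : A) (β : Ω1), P1 (f * g) β = f • P1 g β + g • P1 f β)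
    (hP1R : ∀ (f g : A) (β : Ω1), P1 f (g • β) = P0 f g • β + g • P1 f β)
    (hP11P : ∀ (f : A) (β γ : Ω1), P11 (f • β) γ = f • P11 β γ + w β (P1 f γ))
    (hP2L : ∀ (f g : A) (ω : Ω2), P2 f (g • ω) = P0 f g • ω + g • P2 f ω)
    (hP2w : ∀ (f : A) (β γ : Ω1), P2 f (w β γ) = w (P1 f β) γ + w β (P1 f γ))
    (hsymm : ∀ β γ : Ω1, P11 β γ = P11 γ β)
    (hflat : ∀ (f g : A) (β : Ω1), P1 f (P1 g β) - P1 g (P1 f β) = P1 (P0 f g) β)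
    (htf : ∀ f g : A, P1 f (d0 g) - P1 g (d0 f) = d0 (P0 f g))
    (hLeib : ∀ (f : A) (β : Ω1), d1 (P1 f β) = P11 (d0 f) β + P2 f (d1 β))
    (α : Ω1) (hα : ∀ f : A, P1 f α = 0) :
    (∀ f g : A, P11 (f • d0 g) α = -(f • P2 g (d1 α))) ∧
    (∀ (n : ℕ) (F G : Fin n → A),
      P11 (∑ i, F i • d0 (G i)) α = -∑ i, F i • P2 (G i) (d1 α)) :=
  bracket_with_constant_form_general w d0 d1 P1 P11 P2 hP11P hLeib α hα
end
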